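/- Let p be an odd prime, n ≥ 1, q = p^n, and let F(x) = x^{q − 2} be the inverse power function over GF(q). Let c ∈ GF(q) with c ∉ {0, 1, 4, 4^{-1}}. If χ(c² − 4c) = −1, χ(1 − 4c) = −1, and χ(c) = 1, then the c-differential spectrum of F is given by ω_0 = (q − 5)/2, ω_1 = 5, ω_2 = (q − 5)/2, and ω_i = 0 for i ≥ 3. -/

import Mathlib

open Finset

/-- `cdelta F d c b` is the number of `x` in the finite field `F` with
`(x+1)^d - c * x^d = b`, i.e. the entry `δ_c(b)` of the `c`-DDT of `x ↦ x^d`. -/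
noncomputable def cdelta (F : Type*) [Field F] (d : ℕ) (c b : F) : ℕ :=
  Nat.card {x : F // (x + 1) ^ d - c * x ^ d = b}

/-- `comega F d c i` is the number of `b` in `F` with `δ_c(b) = i`,
i.e. the value `ω_i` of the `c`-differential spectrum of `x ↦ x^d`. -/
noncomputable def comega (F : Type*) [Field F] (d : ℕ) (c : F) (i : ℕ) : ℕ :=
  Nat.card {b : F // cdelta F d c b = i}

open scoped Classical in
/-- The quadratic character of `F`, valued in `ℤ`. -/
noncomputable def chi (F : Type*) [Field F] (x : F) : ℤ :=
  if x = 0 then 0 else if IsSquare x then 1 else -1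

/-! For `x ∉ {0, -1}`, `(x + 1)⁻¹ - c x⁻¹ = b` is equivalent to `b x² + (b + c - 1) x + c = 0`,
while `x = 0` and `x = -1` hit `b = 1` and `b = c`. So for `b ≠ 0`,
`δ_c(b) = 1 + χ(D b) + [b = 1] + [b = c]` with `D b = (b + c - 1)² - 4bc`, and `δ_c(0) = 1`.
Since `D 1 = c² - 4c` and `D c = 1 - 4c` are nonsquares, `δ_c(1) = δ_c(c) = 1`; `D` has exactly
two roots, its own discriminant `16c` being a nonzero square; every other `b` has
`δ_c(b) ∈ {0, 2}`. Hence `ω_1 = 5`, and `∑_b δ_c(b) = q` forces `ω_0 = ω_2`. -/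

section Counting

variable {α : Type*} [Fintype α] {f : α → ℕ}

theorem card_filter_eq_zero_add_one_add_two (hf : ∀ a, f a ≤ 2) :
    #{a | f a = 0} + #{a | f a = 1} + #{a | f a = 2} = Fintype.card α := by
  have hpt (a : α) : (if f a = 0 then 1 else 0) + (if f a = 1 then 1 else 0) +
      (if f a = 2 then 1 else 0) = 1 := by
    have := hf a
    split_ifs <;> omega
  simp only [card_filter, ← sum_add_distrib, hpt, sum_const, card_univ, smul_eq_mul, mul_one]

theorem card_filter_eq_zero_eq_card_filter_eq_two (hf : ∀ a, f a ≤ 2)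
    (hsum : ∑ a, f a = Fintype.card α) : #{a | f a = 0} = #{a | f a = 2} := by
  have hpt (a : α) : f a + (if f a = 0 then 1 else 0) = 1 + (if f a = 2 then 1 else 0) := by
    have := hf a
    split_ifs <;> omega
  have := sum_congr rfl fun a (_ : a ∈ univ) => hpt a
  simp only [sum_add_distrib, hsum, sum_const, card_univ, smul_eq_mul, mul_one] at this
  rw [card_filter, card_filter]
  omega

end Counting

section FiniteField

variable {F : Type*} [Field F] [Fintype F]

theorem chi_eq_quadraticChar [DecidableEq F] (x : F) : chi F x = quadraticChar F x := by
  simp only [chi, quadraticChar_apply, quadraticCharFun]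
  split_ifs <;> rfl

theorem pow_card_sub_two_eq_inv (hF : ringChar F ≠ 2) (x : F) :
    x ^ (Fintype.card F - 2) = x⁻¹ := by
  have hodd : Fintype.card F % 2 = 1 := by
    have := FiniteField.even_card_iff_char_two.not.mp hF
    omega
  have h2 : 2 < Fintype.card F := by
    have := Fintype.one_lt_card (α := F)
    omega
  rcases eq_or_ne x 0 with rfl | hx
  · rw [zero_pow (by omega), inv_zero]
  · refine eq_inv_of_mul_eq_one_left ?_
    rw [← pow_succ, show Fintype.card F - 2 + 1 = Fintype.card F - 1 by omega]
    exact FiniteField.pow_card_sub_one_eq_one x hx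

variable [DecidableEq F]

theorem card_quadratic_roots (hF : ringChar F ≠ 2) {a b c : F} (ha : a ≠ 0) :
    (#{x | a * x ^ 2 + b * x + c = 0} : ℤ) = quadraticChar F (discrim a b c) + 1 := by
  have h2a : 2 * a ≠ 0 := mul_ne_zero (Ring.two_ne_zero hF) ha
  have hiff (x : F) : a * x ^ 2 + b * x + c = 0 ↔ (2 * a * x + b) ^ 2 = discrim a b c := by
    rw [discrim]
    constructor
    · intro h
      linear_combination 4 * a * h
    · intro h
      have : (2 * a) * (2 * (a * x ^ 2 + b * x + c)) = 0 := by linear_combination h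
      simpa [h2a, Ring.two_ne_zero hF] using this
  rw [← quadraticChar_card_sqrts hF, Nat.cast_inj]
  refine card_equiv ((Equiv.mulLeft₀ (2 * a) h2a).trans (Equiv.addRight b)) fun x => ?_
  simp [hiff]

end FiniteField

theorem inv_sub_mul_inv_eq_iff {F : Type*} [Field F] {b c x : F} (hx : x ≠ 0) (hx1 : x + 1 ≠ 0) :
    (x + 1)⁻¹ - c * x⁻¹ = b ↔ b * x ^ 2 + (b + c - 1) * x + c = 0 := by
  field_simp
  constructor <;> intro h <;> linear_combination -h

theorem discrim_at_one {F : Type*} [Field F] (c : F) : discrim 1 (1 + c - 1) c = c ^ 2 - 4 * c := by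
  rw [discrim]; ring

theorem discrim_at_self {F : Type*} [Field F] (c : F) : discrim c (c + c - 1) c = 1 - 4 * c := by
  rw [discrim]; ring

section InverseFunction

variable {F : Type*} [Field F] [Fintype F] [DecidableEq F]

theorem cdelta_eq_card_filter (d : ℕ) (c b : F) :
    cdelta F d c b = #{x | (x + 1) ^ d - c * x ^ d = b} := by
  rw [cdelta, Nat.card_eq_fintype_card, Fintype.card_subtype]

omit [DecidableEq F] in
theorem comega_eq_card_filter (d : ℕ) (c : F) (i : ℕ) :
    comega F d c i = #{b | cdelta F d c b = i} := by
  rw [comega, Nat.card_eq_fintype_card, Fintype.card_subtype]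

theorem sum_cdelta (d : ℕ) (c : F) : ∑ b, cdelta F d c b = Fintype.card F := by
  simp only [cdelta_eq_card_filter]
  exact (card_eq_sum_card_fiberwise fun x _ => mem_univ _).symm

theorem cdelta_inv (hF : ringChar F ≠ 2) {c : F} (hc : c ≠ 0) (b : F) :
    cdelta F (Fintype.card F - 2) c b = #{x | b * x ^ 2 + (b + c - 1) * x + c = 0} +
      (if b = 1 then 1 else 0) + (if b = c then 1 else 0) := by
  -- `x = 0` and `x = -1` are never roots of the quadratic: its values there are `c` and `1`
  have hpt (x : F) : (if (x + 1)⁻¹ - c * x⁻¹ = b then 1 else 0) =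
      (if b * x ^ 2 + (b + c - 1) * x + c = 0 then 1 else 0) +
      (if x = 0 then (if b = 1 then 1 else 0) else 0) +
      (if x = -1 then (if b = c then 1 else 0) else 0) := by
    by_cases hx : x = 0
    · subst hx
      simp [hc, eq_comm]
    by_cases hx1 : x = -1
    · subst hx1
      have : b * (-1) ^ 2 + (b + c - 1) * (-1) + c = 1 := by ring
      simp only [this]
      simp [eq_comm]
    · simp only [if_neg hx, if_neg hx1, add_zero,
        inv_sub_mul_inv_eq_iff hx fun h => hx1 (eq_neg_of_add_eq_zero_left h)]
  simp only [cdelta_eq_card_filter, pow_card_sub_two_eq_inv hF, card_filter, hpt, sum_add_distrib,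
    sum_ite_eq', mem_univ, if_true]

end InverseFunction

section Spectrum

variable {F : Type*} [Field F] [Fintype F] [DecidableEq F] {c : F}

theorem cdelta_inv_zero (hF : ringChar F ≠ 2) (hc0 : c ≠ 0) (hc1 : c ≠ 1) :
    cdelta F (Fintype.card F - 2) c 0 = 1 := by
  have h1c : 1 - c ≠ 0 := sub_ne_zero.mpr hc1.symm
  rw [cdelta_inv hF hc0, if_neg zero_ne_one, if_neg hc0.symm, add_zero, add_zero, card_eq_one]
  refine ⟨c / (1 - c), ext fun x => ?_⟩
  simp only [mem_filter, mem_univ, true_and, mem_singleton, eq_div_iff h1c]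
  constructor <;> intro h <;> linear_combination -h

theorem cdelta_inv_of_ne_zero (hF : ringChar F ≠ 2) (hc0 : c ≠ 0) {b : F} (hb : b ≠ 0) :
    (cdelta F (Fintype.card F - 2) c b : ℤ) = quadraticChar F (discrim b (b + c - 1) c) + 1 +
      (if b = 1 then 1 else 0) + (if b = c then 1 else 0) := by
  rw [cdelta_inv hF hc0]
  push_cast [card_quadratic_roots hF hb]
  rfl

theorem cdelta_inv_of_mem (hF : ringChar F ≠ 2) (hc0 : c ≠ 0) (hc1 : c ≠ 1)
    (h1 : quadraticChar F (c ^ 2 - 4 * c) = -1) (h2 : quadraticChar F (1 - 4 * c) = -1) {b : F}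
    (hb : b ∈ ({0, 1, c} : Finset F)) : cdelta F (Fintype.card F - 2) c b = 1 := by
  simp only [mem_insert, mem_singleton] at hb
  rcases hb with rfl | rfl | rfl
  · exact cdelta_inv_zero hF hc0 hc1
  · have := cdelta_inv_of_ne_zero hF hc0 one_ne_zero
    rw [discrim_at_one, h1, if_pos rfl, if_neg hc1.symm] at this
    omega
  · have := cdelta_inv_of_ne_zero hF hc0 hc0
    rw [discrim_at_self, h2, if_neg hc1, if_pos rfl] at this
    omega

theorem cdelta_inv_of_notMem (hF : ringChar F ≠ 2) (hc0 : c ≠ 0) {b : F}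
    (hb : b ∉ ({0, 1, c} : Finset F)) :
    (cdelta F (Fintype.card F - 2) c b : ℤ) = quadraticChar F (discrim b (b + c - 1) c) + 1 := by
  simp only [mem_insert, mem_singleton, not_or] at hb
  obtain ⟨hb0, hb1, hbc⟩ := hb
  rw [cdelta_inv_of_ne_zero hF hc0 hb0, if_neg hb1, if_neg hbc, add_zero, add_zero]

theorem cdelta_inv_le_two (hF : ringChar F ≠ 2) (hc0 : c ≠ 0) (hc1 : c ≠ 1)
    (h1 : quadraticChar F (c ^ 2 - 4 * c) = -1) (h2 : quadraticChar F (1 - 4 * c) = -1) (b : F) :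
    cdelta F (Fintype.card F - 2) c b ≤ 2 := by
  by_cases hb : b ∈ ({0, 1, c} : Finset F)
  · rw [cdelta_inv_of_mem hF hc0 hc1 h1 h2 hb]; omega
  · have := cdelta_inv_of_notMem hF hc0 hb
    rcases quadraticChar_isQuadratic F (discrim b (b + c - 1) c) with h | h | h <;> omega

theorem cdelta_inv_eq_one_iff (hF : ringChar F ≠ 2) (hc0 : c ≠ 0) (hc1 : c ≠ 1)
    (h1 : quadraticChar F (c ^ 2 - 4 * c) = -1) (h2 : quadraticChar F (1 - 4 * c) = -1) (b : F) :
    cdelta F (Fintype.card F - 2) c b = 1 ↔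
      b ∈ ({0, 1, c} : Finset F) ∨ discrim b (b + c - 1) c = 0 := by
  by_cases hb : b ∈ ({0, 1, c} : Finset F)
  · simp only [hb, true_or, cdelta_inv_of_mem hF hc0 hc1 h1 h2 hb]
  · have := cdelta_inv_of_notMem hF hc0 hb
    rw [← Nat.cast_inj (R := ℤ), this, Nat.cast_one, add_eq_right, quadraticChar_eq_zero_iff]
    simp only [hb, false_or]

theorem card_discrim_eq_zero (hF : ringChar F ≠ 2) (h3 : quadraticChar F c = 1) :
    #{b | discrim b (b + c - 1) c = 0} = 2 := by
  have h2 : (2 : F) ≠ 0 := Ring.two_ne_zero hF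
  have hD (b : F) : discrim b (b + c - 1) c = 1 * b ^ 2 + -2 * (c + 1) * b + (c - 1) ^ 2 := by
    rw [discrim]; ring
  have h16 : discrim 1 (-2 * (c + 1)) ((c - 1) ^ 2) = (2 * 2) ^ 2 * c := by
    rw [discrim]; ring
  have := card_quadratic_roots hF (b := -2 * (c + 1)) (c := (c - 1) ^ 2) one_ne_zero
  rw [h16, map_mul, quadraticChar_sq_one' (mul_ne_zero h2 h2), h3] at this
  simp only [hD]
  omega

theorem comega_inv_one (hF : ringChar F ≠ 2) (hc1 : c ≠ 1)
    (h1 : quadraticChar F (c ^ 2 - 4 * c) = -1) (h2 : quadraticChar F (1 - 4 * c) = -1)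
    (h3 : quadraticChar F c = 1) : comega F (Fintype.card F - 2) c 1 = 5 := by
  have hc0 : c ≠ 0 := fun h => by simp [h] at h3
  have hdisj : Disjoint ({0, 1, c} : Finset F) ({b | discrim b (b + c - 1) c = 0} : Finset F) := by
    simp only [disjoint_left, mem_insert, mem_singleton, mem_filter, mem_univ, true_and]
    rintro b (rfl | rfl | rfl) hD
    · exact pow_ne_zero 2 (sub_ne_zero.mpr hc1) (by rw [discrim] at hD; linear_combination hD)
    · rw [discrim_at_one, ← quadraticChar_eq_zero_iff, h1] at hD
      exact absurd hD (by decide)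
    · rw [discrim_at_self, ← quadraticChar_eq_zero_iff, h2] at hD
      exact absurd hD (by decide)
  have hsplit : ({b | cdelta F (Fintype.card F - 2) c b = 1} : Finset F) =
      {0, 1, c} ∪ ({b | discrim b (b + c - 1) c = 0} : Finset F) := by
    ext b
    simp [cdelta_inv_eq_one_iff hF hc0 hc1 h1 h2 b, or_assoc]
  rw [comega_eq_card_filter, hsplit, card_union_of_disjoint hdisj, card_discrim_eq_zero hF h3,
    card_eq_three.mpr ⟨0, 1, c, zero_ne_one, hc0.symm, hc1.symm, rfl⟩]

end Spectrum

theorem stmt_6_general (p n : ℕ) (hpodd : Odd p)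
    (F : Type*) [Field F] [Fintype F] (hF : Fintype.card F = p ^ n)
    (c : F) (hc1 : c ≠ 1)
    (h1 : chi F (c ^ 2 - 4 * c) = -1) (h2 : chi F (1 - 4 * c) = -1) (h3 : chi F c = 1) :
    comega F (p ^ n - 2) c 0 = (p ^ n - 5) / 2 ∧
    comega F (p ^ n - 2) c 1 = 5 ∧
    comega F (p ^ n - 2) c 2 = (p ^ n - 5) / 2 ∧
    ∀ i, 3 ≤ i → comega F (p ^ n - 2) c i = 0 := by
  classical
  have hF2 : ringChar F ≠ 2 := by
    rw [Ne, FiniteField.even_card_iff_char_two, hF, ← Nat.even_iff,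
      Nat.not_even_iff_odd]
    exact hpodd.pow
  simp only [chi_eq_quadraticChar] at h1 h2 h3
  have hc0 : c ≠ 0 := fun h => by simp [h] at h3
  have hle := cdelta_inv_le_two hF2 hc0 hc1 h1 h2
  have hω1 := comega_inv_one hF2 hc1 h1 h2 h3
  have hω02 := card_filter_eq_zero_eq_card_filter_eq_two hle (sum_cdelta _ c)
  have hpart := card_filter_eq_zero_add_one_add_two hle
  rw [← hF]
  simp only [comega_eq_card_filter] at hω1 ⊢
  refine ⟨by omega, hω1, by omega, fun i hi => card_eq_zero.mpr (filter_false_of_mem ?_)⟩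
  exact fun b _ => by have := hle b; omega

theorem stmt_6 (p n : ℕ) (hp : p.Prime) (hpodd : Odd p) (hn : 1 ≤ n)
    (F : Type*) [Field F] [Fintype F] (hF : Fintype.card F = p ^ n)
    (c : F) (hc0 : c ≠ 0) (hc1 : c ≠ 1) (hc4 : c ≠ 4) (hc4i : c ≠ (4 : F)⁻¹)
    (h1 : chi F (c ^ 2 - 4 * c) = -1) (h2 : chi F (1 - 4 * c) = -1) (h3 : chi F c = 1) :
    comega F (p ^ n - 2) c 0 = (p ^ n - 5) / 2 ∧
    comega F (p ^ n - 2) c 1 = 5 ∧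
    comega F (p ^ n - 2) c 2 = (p ^ n - 5) / 2 ∧
    ∀ i, 3 ≤ i → comega F (p ^ n - 2) c i = 0 :=
  stmt_6_general p n hpodd F hF c hc1 h1 h2 h3
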